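/- Let Λ be a non-ordinary numerical semigroup with conductor c = c(Λ) and ω = ω(Λ), and suppose c + 1 is a right generator of Λ. Let Λ̃ = Λ ∖ {c+1} and ω̃ = ω(Λ̃). Then ω̃ = gcd(ω, c), shrink(Λ̃) = (ω/ω̃)·shrink(Λ) + (c/ω̃)·ℕ, and c(shrink(Λ̃)) ≤ c(shrink(Λ))·(ω/ω̃) + (c/ω̃ − 1)·(ω/ω̃ − 1). -/

import Mathlib

/-!
Deleting `c + 1` makes `c + 1` the new Frobenius number, so the left elements of `Λ̃` are those
of `Λ` together with `c` (the old Frobenius number `c - 1` stays a gap). Hence `ω̃ = gcd(ω, c)`,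
and the generators of `shrink(Λ̃)` are `k = ω/ω̃` times those of `shrink(Λ)` together with
`b = c/ω̃`. As `k` and `b` are coprime, Sylvester's two-coin bound writes every
`n ≥ c(shrink Λ)·k + (b-1)(k-1)` as `k x + b y` with `x ≥ c(shrink Λ)`, so `x ∈ shrink(Λ)`.
-/

open Pointwise

namespace NumSgpPaper

/-- `S` is a numerical semigroup: an additive submonoid of ℕ with finite complement. -/
structure IsNumSgp (S : Set ℕ) : Prop where
  zero_mem : 0 ∈ S
  add_mem : ∀ ⦃a b : ℕ⦄, a ∈ S → b ∈ S → a + b ∈ S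
  cofinite : Sᶜ.Finite

/-- The Frobenius number: the largest gap of `S` (junk value `0` if there are no gaps). -/
noncomputable def frob (S : Set ℕ) : ℕ := sSup Sᶜ

open Classical in
/-- The conductor: one plus the largest gap, and `0` if there are no gaps (so `c(ℕ) = 0`). -/
noncomputable def conductor (S : Set ℕ) : ℕ := if Sᶜ = ∅ then 0 else frob S + 1

/-- The genus: the number of gaps. -/
noncomputable def genus (S : Set ℕ) : ℕ := Sᶜ.ncard

/-- The multiplicity: the smallest positive element. -/
noncomputable def mult (S : Set ℕ) : ℕ := sInf {n : ℕ | n ∈ S ∧ 0 < n}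

/-- The jump: the difference between the second and first positive elements. -/
noncomputable def jump (S : Set ℕ) : ℕ := sInf {n : ℕ | n ∈ S ∧ mult S < n} - mult S

/-- A minimal generator: a positive element of `S` that is not the sum of
two positive elements of `S`. -/
def IsMinGen (S : Set ℕ) (x : ℕ) : Prop :=
  0 < x ∧ x ∈ S ∧ ¬ ∃ a b : ℕ, 0 < a ∧ 0 < b ∧ a ∈ S ∧ b ∈ S ∧ a + b = x

/-- A right generator: a minimal generator larger than the Frobenius number. -/
def IsRightGen (S : Set ℕ) (x : ℕ) : Prop := IsMinGen S x ∧ frob S < x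

/-- A strong generator: a right generator `σ` such that `σ + m(S)` is a minimal
generator of `S \ {σ}`. -/
def IsStrongGen (S : Set ℕ) (σ : ℕ) : Prop :=
  IsRightGen S σ ∧ IsMinGen (S \ {σ}) (σ + mult S)

/-- `S` is ordinary when its gaps are exactly `{1, …, g(S)}`. -/
def IsOrdinary (S : Set ℕ) : Prop := Sᶜ = Set.Icc 1 (genus S)

/-- The left elements: the elements of `S` smaller than the Frobenius number. -/
def leftEls (S : Set ℕ) : Set ℕ := {x : ℕ | x ∈ S ∧ x < frob S}

/-- The gcd of a set of natural numbers. -/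
noncomputable def setGcd (A : Set ℕ) : ℕ :=
  sInf {d : ℕ | (∀ a ∈ A, d ∣ a) ∧ ∀ e : ℕ, (∀ a ∈ A, e ∣ a) → e ∣ d}

/-- `ω(S)`: the gcd of the left elements of `S`. -/
noncomputable def omega' (S : Set ℕ) : ℕ := setGcd (leftEls S)

/-- The shrinking of `S`: the additive submonoid of ℕ generated by the left
elements divided by their gcd. -/
noncomputable def shrink (S : Set ℕ) : Set ℕ :=
  (AddSubmonoid.closure ((fun x => x / omega' S) '' leftEls S) : AddSubmonoid ℕ)

/-- `T` is a descendant of `S`: a numerical semigroup contained in `S` all of whose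
missing elements lie beyond the Frobenius number of `S`. -/
def IsDescendant (S T : Set ℕ) : Prop :=
  IsNumSgp T ∧ T ⊆ S ∧ ∀ x ∈ S \ T, frob S < x

/-- The pseudo-ordinary semigroup `P_{m,u} = {0, m} ∪ {n : n ≥ m + u}`. -/
def P (m u : ℕ) : Set ℕ := {0, m} ∪ {n : ℕ | m + u ≤ n}

/-- The submonoid of ℕ generated by the interval `{a, …, b}`. -/
def intervalSgp (a b : ℕ) : Set ℕ := (AddSubmonoid.closure (Set.Icc a b) : AddSubmonoid ℕ)


theorem _root_.Nat.setGcd_insert (n : ℕ) (s : Set ℕ) :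
    Nat.setGcd (insert n s) = Nat.gcd n (Nat.setGcd s) := by
  refine Nat.dvd_antisymm ?_ (Nat.dvd_setGcd_iff.mpr ?_)
  · exact Nat.dvd_gcd (Nat.setGcd_dvd_of_mem (Set.mem_insert n s))
      (Nat.setGcd_mono (Set.subset_insert n s))
  · rintro m (rfl | hm)
    exacts [Nat.gcd_dvd_left _ _, (Nat.gcd_dvd_right _ _).trans (Nat.setGcd_dvd_of_mem hm)]

theorem _root_.Nat.setGcd_image_div_setGcd (s : Set ℕ) (hs : Nat.setGcd s ≠ 0) :
    Nat.setGcd ((· / Nat.setGcd s) '' s) = 1 := by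
  set d := Nat.setGcd s
  suffices d * Nat.setGcd ((· / d) '' s) ∣ d * 1 by
    exact Nat.dvd_one.mp (Nat.dvd_of_mul_dvd_mul_left (Nat.pos_of_ne_zero hs) this)
  rw [mul_one, Nat.dvd_setGcd_iff]
  intro a ha
  have hda : d ∣ a := Nat.setGcd_dvd_of_mem ha
  rw [← Nat.mul_div_cancel' hda]
  exact mul_dvd_mul_left d (Nat.setGcd_dvd_of_mem ⟨a, ha, rfl⟩)

theorem _root_.Nat.compl_closure_finite_of_setGcd_eq_one {s : Set ℕ} (hs : Nat.setGcd s = 1) :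
    (AddSubmonoid.closure s : Set ℕ)ᶜ.Finite := by
  obtain ⟨N, hN⟩ := Nat.exists_mem_closure_of_ge s
  refine (Set.finite_Iio N).subset fun n hn => ?_
  by_contra hNn
  exact hn (hN n (not_lt.mp hNn) (hs ▸ one_dvd n))

theorem _root_.Nat.exists_eq_mul_add_mul_of_le {k b N n : ℕ} (hkb : Nat.Coprime k b)
    (hn : N * k + (b - 1) * (k - 1) ≤ n) : ∃ x ≥ N, ∃ y, n = k * x + b * y := by
  obtain ⟨m, rfl⟩ := Nat.exists_eq_add_of_le ((Nat.le_add_right _ _).trans hn)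
  obtain ⟨a, y, hm⟩ := Nat.exists_add_mul_eq_of_gcd_dvd_of_mul_pred_le k b m
    (by rw [hkb.gcd_eq_one]; exact one_dvd m)
    (by simp only [Nat.pred_eq_sub_one]; lia)
  exact ⟨N + a, Nat.le_add_right N a, y, by rw [← hm]; ring⟩

theorem _root_.Nat.div_eq_div_mul_div {d ω a : ℕ} (hd : d ∣ ω) (hω : ω ∣ a) :
    a / d = ω / d * (a / ω) := by
  rcases Nat.eq_zero_or_pos ω with rfl | hωpos
  · simp [Nat.eq_zero_of_zero_dvd hω]
  · rw [Nat.div_mul_div_comm hd hω, mul_comm ω a, Nat.mul_div_mul_right _ _ hωpos]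

theorem setGcd_eq_natSetGcd (A : Set ℕ) : setGcd A = Nat.setGcd A := by
  have : {d | (∀ a ∈ A, d ∣ a) ∧ ∀ e : ℕ, (∀ a ∈ A, e ∣ a) → e ∣ d} = {Nat.setGcd A} := by
    ext d
    simp only [Set.mem_ofPred_eq, Set.mem_singleton_iff, ← Nat.dvd_setGcd_iff]
    constructor
    · rintro ⟨hd, he⟩
      exact Nat.dvd_antisymm hd (he _ dvd_rfl)
    · rintro rfl
      exact ⟨dvd_rfl, fun e he => he⟩
  rw [setGcd, this, csInf_singleton]

theorem omega'_eq_setGcd (S : Set ℕ) : omega' S = Nat.setGcd (leftEls S) :=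
  setGcd_eq_natSetGcd _

section Conductor

variable {S : Set ℕ} {n : ℕ}

theorem le_frob (hS : Sᶜ.Finite) (hn : n ∉ S) : n ≤ frob S :=
  le_csSup hS.bddAbove hn

theorem mem_of_frob_lt (hS : Sᶜ.Finite) (hn : frob S < n) : n ∈ S := by
  by_contra h
  exact (le_frob hS h).not_gt hn

theorem frob_notMem (hS : Sᶜ.Finite) (hne : Sᶜ.Nonempty) : frob S ∉ S :=
  hne.csSup_mem hS

theorem conductor_eq_frob_add_one (hne : Sᶜ.Nonempty) : conductor S = frob S + 1 := by
  rw [conductor, if_neg hne.ne_empty]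

theorem mem_of_conductor_le (hS : Sᶜ.Finite) (hn : conductor S ≤ n) : n ∈ S := by
  by_contra h
  rw [conductor_eq_frob_add_one ⟨n, h⟩] at hn
  exact (le_frob hS h).not_gt hn

theorem conductor_le_of_forall_mem {N : ℕ} (h : ∀ n ≥ N, n ∈ S) : conductor S ≤ N := by
  rcases Sᶜ.eq_empty_or_nonempty with he | hne
  · simp [conductor, he]
  · have hlt : ∀ g ∈ Sᶜ, g < N := fun g hg => not_le.mp fun hNg => hg (h g hNg)
    have hS : Sᶜ.Finite := (Set.finite_Iio N).subset hlt
    rw [conductor_eq_frob_add_one hne]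
    exact hlt _ (frob_notMem hS hne)

theorem frob_diff_singleton (hS : Sᶜ.Finite) {σ : ℕ} (hσ : frob S ≤ σ) :
    frob (S \ {σ}) = σ := by
  have hcompl : (S \ {σ})ᶜ = insert σ Sᶜ := by
    ext x
    simp only [Set.mem_compl_iff, Set.mem_sdiff, Set.mem_singleton_iff, Set.mem_insert_iff]
    tauto
  rw [frob, hcompl]
  refine le_antisymm (csSup_le ⟨σ, Set.mem_insert σ _⟩ ?_) (le_csSup (hS.insert σ).bddAbove
    (Set.mem_insert σ _))
  rintro g (rfl | hg)
  exacts [le_rfl, (le_frob hS hg).trans hσ]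

end Conductor

theorem leftEls_diff_conductor_add_one {S : Set ℕ} (hS : Sᶜ.Finite) (hne : Sᶜ.Nonempty) :
    leftEls (S \ {conductor S + 1}) = insert (conductor S) (leftEls S) := by
  rw [conductor_eq_frob_add_one hne]
  have hfrob := frob_diff_singleton hS (Nat.le_add_right (frob S) 2)
  ext x
  simp only [leftEls, hfrob, Set.mem_ofPred_eq, Set.mem_sdiff, Set.mem_singleton_iff,
    Set.mem_insert_iff]
  constructor
  · rintro ⟨⟨hx, hxσ⟩, hlt⟩
    rcases lt_or_ge x (frob S) with hxF | hFx
    · exact Or.inr ⟨hx, hxF⟩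
    · have : x ≠ frob S := fun h => frob_notMem hS hne (h ▸ hx)
      omega
  · rintro (rfl | ⟨hx, hlt⟩)
    · exact ⟨⟨mem_of_frob_lt hS (Nat.lt_succ_self _), by omega⟩, by omega⟩
    · exact ⟨⟨hx, by omega⟩, by omega⟩

theorem compl_nonempty_of_not_isOrdinary {S : Set ℕ} (hord : ¬ IsOrdinary S) : Sᶜ.Nonempty := by
  rw [Set.nonempty_iff_ne_empty]
  intro he
  exact hord (by simp [IsOrdinary, genus, he])

theorem IsNumSgp.exists_pos_mem_leftEls {S : Set ℕ} (hS : IsNumSgp S) (hord : ¬ IsOrdinary S) :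
    ∃ x ∈ leftEls S, 0 < x := by
  by_contra! hno
  have hne := compl_nonempty_of_not_isOrdinary hord
  have hgaps : Sᶜ = Set.Icc 1 (frob S) := by
    ext x
    simp only [Set.mem_compl_iff, Set.mem_Icc]
    constructor
    · intro hx
      exact ⟨Nat.one_le_iff_ne_zero.mpr (fun h0 => hx (h0 ▸ hS.zero_mem)), le_frob hS.cofinite hx⟩
    · rintro ⟨h1, h2⟩ hx
      rcases h2.lt_or_eq with hlt | rfl
      · exact absurd (hno x ⟨hx, hlt⟩) (by omega)
      · exact frob_notMem hS.cofinite hne hx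
  exact hord (by simp [IsOrdinary, genus, hgaps])

theorem IsNumSgp.omega'_pos {S : Set ℕ} (hS : IsNumSgp S) (hord : ¬ IsOrdinary S) :
    0 < omega' S := by
  obtain ⟨x, hx, hxpos⟩ := hS.exists_pos_mem_leftEls hord
  rw [omega'_eq_setGcd, Nat.pos_iff_ne_zero, Ne, Nat.setGcd_eq_zero_iff]
  exact fun h => hxpos.ne' (h hx)

theorem finite_compl_shrink {S : Set ℕ} (hS : omega' S ≠ 0) : (shrink S)ᶜ.Finite := by
  rw [omega'_eq_setGcd] at hS
  rw [shrink, omega'_eq_setGcd]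
  exact Nat.compl_closure_finite_of_setGcd_eq_one (Nat.setGcd_image_div_setGcd _ hS)

theorem coe_closure_insert_image_mul (k b : ℕ) (s : Set ℕ) :
    (AddSubmonoid.closure (insert b ((k * ·) '' s)) : Set ℕ) =
      (k * ·) '' AddSubmonoid.closure s + (b * ·) '' Set.univ := by
  have hmul : (k * ·) '' s = AddMonoidHom.mulLeft k '' s := rfl
  have hsingle : (AddSubmonoid.closure {b} : Set ℕ) = (b * ·) '' Set.univ := by
    ext x
    simp [AddSubmonoid.mem_closure_singleton, mul_comm]
  rw [Set.insert_eq, AddSubmonoid.closure_union, sup_comm, AddSubmonoid.coe_sup, hsingle, hmul,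
    ← AddMonoidHom.map_mclosure, AddSubmonoid.coe_map]
  rfl

theorem closure_image_div_insert (L : Set ℕ) (c : ℕ) :
    (AddSubmonoid.closure ((· / Nat.gcd (Nat.setGcd L) c) '' insert c L) : Set ℕ) =
      (Nat.setGcd L / Nat.gcd (Nat.setGcd L) c * ·) ''
          AddSubmonoid.closure ((· / Nat.setGcd L) '' L)
        + (c / Nat.gcd (Nat.setGcd L) c * ·) '' Set.univ := by
  have hdiv : ∀ a ∈ L, a / Nat.gcd (Nat.setGcd L) c =
      Nat.setGcd L / Nat.gcd (Nat.setGcd L) c * (a / Nat.setGcd L) := fun a ha =>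
    Nat.div_eq_div_mul_div (Nat.gcd_dvd_left _ c) (Nat.setGcd_dvd_of_mem ha)
  rw [Set.image_insert_eq, Set.image_congr hdiv, ← Set.image_image]
  exact coe_closure_insert_image_mul _ _ _

theorem conductor_image_mul_add_le {S : Set ℕ} (hS : Sᶜ.Finite) {k b : ℕ}
    (hkb : Nat.Coprime k b) :
    conductor ((k * ·) '' S + (b * ·) '' Set.univ) ≤ conductor S * k + (b - 1) * (k - 1) := by
  refine conductor_le_of_forall_mem fun n hn => ?_
  obtain ⟨x, hx, y, rfl⟩ := Nat.exists_eq_mul_add_mul_of_le hkb hn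
  exact Set.add_mem_add ⟨x, mem_of_conductor_le hS hx, rfl⟩ ⟨y, trivial, rfl⟩

theorem stmt11_general (Λ : Set ℕ) (h : IsNumSgp Λ) (hord : ¬ IsOrdinary Λ) :
    omega' (Λ \ {conductor Λ + 1}) = Nat.gcd (omega' Λ) (conductor Λ) ∧
    shrink (Λ \ {conductor Λ + 1}) =
      (fun x => (omega' Λ / omega' (Λ \ {conductor Λ + 1})) * x) '' shrink Λ
        + (fun n => (conductor Λ / omega' (Λ \ {conductor Λ + 1})) * n) '' (Set.univ : Set ℕ) ∧
    conductor (shrink (Λ \ {conductor Λ + 1})) ≤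
      conductor (shrink Λ) * (omega' Λ / omega' (Λ \ {conductor Λ + 1}))
        + (conductor Λ / omega' (Λ \ {conductor Λ + 1}) - 1)
          * (omega' Λ / omega' (Λ \ {conductor Λ + 1}) - 1) := by
  have hleft := leftEls_diff_conductor_add_one h.cofinite (compl_nonempty_of_not_isOrdinary hord)
  have homega : omega' (Λ \ {conductor Λ + 1}) = Nat.gcd (omega' Λ) (conductor Λ) := by
    rw [omega'_eq_setGcd, omega'_eq_setGcd, hleft, Nat.setGcd_insert, Nat.gcd_comm]
  have hshrink : shrink (Λ \ {conductor Λ + 1}) =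
      (fun x => (omega' Λ / omega' (Λ \ {conductor Λ + 1})) * x) '' shrink Λ
        + (fun n => (conductor Λ / omega' (Λ \ {conductor Λ + 1})) * n) '' Set.univ := by
    rw [shrink, shrink, homega, hleft, omega'_eq_setGcd]
    exact closure_image_div_insert _ _
  refine ⟨homega, hshrink, ?_⟩
  have hω := h.omega'_pos hord
  rw [hshrink, homega]
  exact conductor_image_mul_add_le (finite_compl_shrink hω.ne')
    (Nat.coprime_div_gcd_div_gcd (Nat.gcd_pos_of_pos_left _ hω))

/-- If `c + 1` is a right generator of the non-ordinary semigroup `Λ`, and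
`Λ̃ = Λ \ {c+1}`, `ω̃ = ω(Λ̃)`, then `ω̃ = gcd(ω, c)`,
`shrink(Λ̃) = (ω/ω̃)·shrink(Λ) + (c/ω̃)·ℕ`, and
`c(shrink(Λ̃)) ≤ c(shrink(Λ))·(ω/ω̃) + (c/ω̃ - 1)·(ω/ω̃ - 1)`. -/
theorem stmt11 (Λ : Set ℕ) (h : IsNumSgp Λ) (hord : ¬ IsOrdinary Λ)
    (hσ : IsRightGen Λ (conductor Λ + 1)) :
    omega' (Λ \ {conductor Λ + 1}) = Nat.gcd (omega' Λ) (conductor Λ) ∧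
    shrink (Λ \ {conductor Λ + 1}) =
      (fun x => (omega' Λ / omega' (Λ \ {conductor Λ + 1})) * x) '' shrink Λ
        + (fun n => (conductor Λ / omega' (Λ \ {conductor Λ + 1})) * n) '' (Set.univ : Set ℕ) ∧
    conductor (shrink (Λ \ {conductor Λ + 1})) ≤
      conductor (shrink Λ) * (omega' Λ / omega' (Λ \ {conductor Λ + 1}))
        + (conductor Λ / omega' (Λ \ {conductor Λ + 1}) - 1)
          * (omega' Λ / omega' (Λ \ {conductor Λ + 1}) - 1) :=
  stmt11_general Λ h hord

end NumSgpPaper
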